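/- arXiv:1602.05478 — 2 statements merged into one kernel-verified Lean document; each statement's English description precedes it below -/
import Mathlib

section
/- Let Q be a lower transition rate operator on a finite nonempty set 𝒳, and let (T_t)_{t≥0} be the associated family of operators determined by the differential equation d/dt T_t f = Q(T_t f) with T_0 f = f. Then Q is ergodic if and only if both of the following hold: (i) the set 𝒳_{1A} := {x ∈ 𝒳 : for every y ∈ 𝒳, x is upper reachable from y} is nonempty, and (ii) for every x ∈ 𝒳 \ 𝒳_{1A}, the set 𝒳_{1A} is lower reachable from x. -/
open Filter Topology

/-- The minimum of a real-valued function on a finite nonempty type. -/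
noncomputable def minf {X : Type*} [Fintype X] [Nonempty X] (f : X → ℝ) : ℝ :=
  Finset.univ.inf' Finset.univ_nonempty f

/-- The maximum of a real-valued function on a finite nonempty type. -/
noncomputable def maxf {X : Type*} [Fintype X] [Nonempty X] (f : X → ℝ) : ℝ :=
  Finset.univ.sup' Finset.univ_nonempty f

/-- The (real-valued) indicator function of a set. -/
noncomputable def ind {X : Type*} (A : Set X) : X → ℝ := A.indicator 1

/-- The conjugate (upper) operator `f ↦ -(Q (-f))`. -/
def conjOp {X : Type*} (Q : (X → ℝ) → (X → ℝ)) : (X → ℝ) → (X → ℝ) :=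
  fun f => -(Q (-f))

/-- A lower transition rate operator. -/
def IsLTRO {X : Type*} [Fintype X] (Q : (X → ℝ) → (X → ℝ)) : Prop :=
  (∀ μ : ℝ, Q (fun _ => μ) = 0) ∧
  (∀ f g : X → ℝ, Q f + Q g ≤ Q (f + g)) ∧
  (∀ l : ℝ, 0 ≤ l → ∀ f : X → ℝ, Q (l • f) = l • Q f) ∧
  (∀ x y : X, x ≠ y → 0 ≤ Q (ind {y}) x)

/-- A lower transition operator. -/
def IsLTO {X : Type*} [Fintype X] [Nonempty X] (T : (X → ℝ) → (X → ℝ)) : Prop :=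
  (∀ f : X → ℝ, ∀ x : X, minf f ≤ T f x) ∧
  (∀ f g : X → ℝ, T f + T g ≤ T (f + g)) ∧
  (∀ l : ℝ, 0 ≤ l → ∀ f : X → ℝ, T (l • f) = l • T f)

/-- `T` is the family of operators solving `d/dt T_t f = Q (T_t f)` on `[0,∞)`
with `T_0 f = f`. -/
def IsSol {X : Type*} [Fintype X] (Q : (X → ℝ) → (X → ℝ))
    (T : ℝ → (X → ℝ) → (X → ℝ)) : Prop :=
  (∀ f : X → ℝ, T 0 f = f) ∧
  (∀ f : X → ℝ, ∀ t : ℝ, 0 ≤ t →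
    HasDerivWithinAt (fun s => T s f) (Q (T t f)) (Set.Ici 0) t)

/-- Ergodicity of a lower transition rate operator, expressed via its
associated time-dependent family `T`. -/
def ErgodicQ {X : Type*} [Fintype X] (T : ℝ → (X → ℝ) → (X → ℝ)) : Prop :=
  ∀ f : X → ℝ, ∃ c : ℝ, Tendsto (fun t => T t f) atTop (𝓝 (fun _ : X => c))

/-- Ergodicity of a lower transition operator. -/
def ErgodicT {X : Type*} [Fintype X] (T : (X → ℝ) → (X → ℝ)) : Prop :=
  ∀ f : X → ℝ, ∃ c : ℝ, Tendsto (fun n : ℕ => T^[n] f) atTop (𝓝 (fun _ : X => c))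

/-- `x` is upper reachable from `y` (w.r.t. the lower transition rate operator `Q`). -/
def upperReach {X : Type*} [Fintype X] (Q : (X → ℝ) → (X → ℝ)) (y x : X) : Prop :=
  ∃ (n : ℕ) (p : ℕ → X), p 0 = y ∧ p n = x ∧
    ∀ k : ℕ, k < n → p (k + 1) ≠ p k ∧ 0 < conjOp Q (ind {p (k + 1)}) (p k)

/-- One step of the lower-reachability construction: `A ↦ A ∪ {y ∉ A : Q(𝟙_A)(y) > 0}`. -/
def lowerStep {X : Type*} [Fintype X] (Q : (X → ℝ) → (X → ℝ)) (A : Set X) : Set X :=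
  A ∪ {y : X | y ∉ A ∧ 0 < Q (ind A) y}

/-- `A` is lower reachable from `x`: `x ∈ Aₙ` where `n` is the first index with
`Aₙ = Aₙ₊₁` (equivalently, any such index, since the sequence is determined by
recursion and increasing). -/
def lowerReach {X : Type*} [Fintype X] (Q : (X → ℝ) → (X → ℝ)) (x : X) (A : Set X) : Prop :=
  ∃ n : ℕ, (lowerStep Q)^[n] A = (lowerStep Q)^[n + 1] A ∧ x ∈ (lowerStep Q)^[n] A

/-- The set `𝒳_RA := {x : ∃ n ≥ 1, min T̄ⁿ 𝟙ₓ > 0}`. -/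
noncomputable def XRA {X : Type*} [Fintype X] [Nonempty X]
    (T : (X → ℝ) → (X → ℝ)) : Set X :=
  {x : X | ∃ n : ℕ, 0 < minf ((conjOp T)^[n + 1] (ind {x}))}

/-- A regularly absorbing lower transition operator. -/
def RegAbs {X : Type*} [Fintype X] [Nonempty X] (T : (X → ℝ) → (X → ℝ)) : Prop :=
  (XRA T).Nonempty ∧ ∀ x : X, x ∉ XRA T → ∃ n : ℕ, 0 < T^[n + 1] (ind (XRA T)) x

/-- The set `𝒳_1A := {x : min T̄ 𝟙ₓ > 0}`. -/
noncomputable def X1A {X : Type*} [Fintype X] [Nonempty X]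
    (T : (X → ℝ) → (X → ℝ)) : Set X :=
  {x : X | 0 < minf (conjOp T (ind {x}))}

/-- A 1-step absorbing lower transition operator. -/
def OneStepAbs {X : Type*} [Fintype X] [Nonempty X] (T : (X → ℝ) → (X → ℝ)) : Prop :=
  (X1A T).Nonempty ∧ ∀ x : X, x ∉ X1A T → 0 < T (ind (X1A T)) x

/-- The operator (sup) norm of a non-negatively homogeneous operator. -/
noncomputable def opN {X : Type*} [Fintype X] (Q : (X → ℝ) → (X → ℝ)) : ℝ :=
  sSup {r : ℝ | ∃ f : X → ℝ, ‖f‖ = 1 ∧ r = ‖Q f‖}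

/-!
The argument rests on a maximum principle for `u' = Q u`: a finite maximum of functions whose
derivative is nonpositive wherever they attain the maximum does not increase. It makes `T_t` a
monotone, positively homogeneous, translation-equivariant semigroup with
`T_t f x ≥ exp (t Q 𝟙_x x) f x` for `f ≥ 0`, and lets reachability be read off `T_t`:
if `A` is lower reachable from `x` then `T_t 𝟙_A x > 0` for `t > 0`, and otherwise
`T_t 𝟙_A x = 0`, because the stable set `Aₙ` is never left; if `x` is upper reachable from `y`
then `T̄_t 𝟙_x y > 0`; and a set `S` closed under upper edges has `T_t 𝟙_S = 1` on `S`.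

Necessity: ergodicity gives `T_t 𝟙_S` a single constant limit. This fails when there are two
disjoint closed sets, which is the case if `𝒳_1A = ∅` (take a state whose reachable set is
smallest), and it fails at `x` and `𝒳_1A` if `𝒳_1A` is not lower reachable from `x`.

Sufficiency: `δ = min T_1 𝟙_{𝒳_1A}` and `γ = min_{e ∈ 𝒳_1A} min T̄_1 𝟙_e` are positive, and
`T_1` contracts the oscillation `max f - min f` by the factor `1 - min δ γ`. Since `min T_t f`
increases and `max T_t f` decreases, `T_t f` converges to a constant.
-/

open Set

section Preliminaries

variable {X : Type*}

@[simp] lemma ind_of_mem {A : Set X} {x : X} (h : x ∈ A) : ind A x = 1 := by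
  simp [ind, h]

@[simp] lemma ind_of_notMem {A : Set X} {x : X} (h : x ∉ A) : ind A x = 0 := by
  simp [ind, h]

lemma ind_nonneg (A : Set X) : 0 ≤ ind A := fun x => by
  by_cases h : x ∈ A <;> simp [h]

lemma ind_le_one (A : Set X) : ind A ≤ 1 := fun x => by
  by_cases h : x ∈ A <;> simp [h]

lemma ind_mono {A B : Set X} (h : A ⊆ B) : ind A ≤ ind B :=
  Set.indicator_le_indicator_of_subset h zero_le_one

lemma ind_compl (A : Set X) : ind Aᶜ = 1 - ind A := Set.indicator_compl A 1

lemma ind_singleton [DecidableEq X] (y : X) : ind {y} = Pi.single y 1 :=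
  Set.indicator_singleton y 1

lemma sum_smul_ind_singleton [Fintype X] (h : X → ℝ) : ∑ y, h y • ind {y} = h := by
  classical
  simp_rw [ind_singleton]
  exact (pi_eq_sum_univ' h).symm

lemma exists_pos_forall_le {ι : Type*} [Finite ι] {f : ι → ℝ} (hf : ∀ i, 0 < f i) :
    ∃ β > 0, ∀ i, β ≤ f i := by
  cases isEmpty_or_nonempty ι
  · exact ⟨1, one_pos, fun i => isEmptyElim i⟩
  · obtain ⟨i, hi⟩ := Finite.exists_min f
    exact ⟨f i, hf i, hi⟩

variable [Fintype X] [Nonempty X]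

lemma minf_le (f : X → ℝ) (x : X) : minf f ≤ f x := Finset.inf'_le f (Finset.mem_univ x)

lemma le_maxf (f : X → ℝ) (x : X) : f x ≤ maxf f := Finset.le_sup' f (Finset.mem_univ x)

lemma le_minf {f : X → ℝ} {b : ℝ} (h : ∀ x, b ≤ f x) : b ≤ minf f :=
  Finset.le_inf' _ f fun x _ => h x

lemma maxf_le {f : X → ℝ} {b : ℝ} (h : ∀ x, f x ≤ b) : maxf f ≤ b :=
  Finset.sup'_le _ f fun x _ => h x

noncomputable def osc (f : X → ℝ) : ℝ := maxf f - minf f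

lemma osc_le_iff {f : X → ℝ} {b : ℝ} : osc f ≤ b ↔ ∀ x y, f x - f y ≤ b := by
  refine ⟨fun h x y => ?_, fun h => ?_⟩
  · linarith [le_maxf f x, minf_le f y, show maxf f - minf f ≤ b from h]
  · obtain ⟨x, -, hx⟩ := Finset.exists_mem_eq_sup' Finset.univ_nonempty f
    obtain ⟨y, -, hy⟩ := Finset.exists_mem_eq_inf' Finset.univ_nonempty f
    simpa only [osc, maxf, minf, hx, hy] using h x y

lemma osc_nonneg (f : X → ℝ) : 0 ≤ osc f :=
  sub_nonneg.2 ((minf_le f (Classical.arbitrary X)).trans (le_maxf f _))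

end Preliminaries

section MaximumPrinciple

variable {ι : Type*}

lemma eventually_slope_sup'_lt {S : Finset ι} (hS : S.Nonempty) {u : ℝ → ι → ℝ}
    {u' : ι → ℝ} {x r : ℝ} (hr : 0 < r)
    (hu : ∀ i ∈ S, HasDerivWithinAt (fun t => u t i) (u' i) (Ici x) x)
    (hu' : ∀ i ∈ S, u x i = S.sup' hS (u x) → u' i ≤ 0) :
    ∀ᶠ z in 𝓝[>] x, slope (fun t => S.sup' hS (u t)) x z < r := by
  set M := S.sup' hS (u x)
  have hlt : ∀ᶠ z in 𝓝[>] x, ∀ i ∈ S, u z i < M + r * (z - x) := by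
    rw [Finset.eventually_all]
    intro i hi
    rcases (Finset.le_sup' (u x) hi).eq_or_lt with hmax | hlt
    · have hslope := ((hu i hi).Ioi_of_Ici).limsup_slope_le' (lt_irrefl x)
        ((hu' i hi hmax).trans_lt hr)
      filter_upwards [hslope, self_mem_nhdsWithin] with z hz (hxz : x < z)
      rw [slope_def_field, div_lt_iff₀ (sub_pos.2 hxz)] at hz
      linarith
    · have hcont := ((hu i hi).continuousWithinAt.mono Ioi_subset_Ici_self).tendsto
      filter_upwards [hcont.eventually_lt_const hlt, self_mem_nhdsWithin] with z hz (hxz : x < z)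
      nlinarith
  filter_upwards [hlt, self_mem_nhdsWithin] with z hz (hxz : x < z)
  rw [slope_def_field, div_lt_iff₀ (sub_pos.2 hxz), sub_lt_iff_lt_add']
  exact (Finset.sup'_lt_iff hS).2 hz

theorem le_of_deriv_nonpos_at_argmax [Finite ι] {S : Set ι} {u u' : ℝ → ι → ℝ} {M : ℝ}
    (hu : ∀ t, 0 ≤ t → ∀ i ∈ S, HasDerivWithinAt (fun s => u s i) (u' t i) (Ici 0) t)
    (hu' : ∀ t, 0 ≤ t → ∀ i ∈ S, (∀ j ∈ S, u t j ≤ u t i) → u' t i ≤ 0)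
    (h0 : ∀ i ∈ S, u 0 i ≤ M) {t : ℝ} (ht : 0 ≤ t) {i : ι} (hi : i ∈ S) : u t i ≤ M := by
  set Sf := (toFinite S).toFinset
  have hmem : ∀ {j}, j ∈ Sf ↔ j ∈ S := Finite.mem_toFinset _
  have hne : Sf.Nonempty := ⟨i, hmem.2 hi⟩
  have hcont : ContinuousOn (fun s => Sf.sup' hne (u s)) (Icc 0 t) :=
    ContinuousOn.finset_sup'_apply hne fun j hj s hs =>
      (hu s hs.1 j (hmem.1 hj)).continuousWithinAt.mono Icc_subset_Ici_self
  have hF := image_le_of_liminf_slope_right_le_deriv_boundary hcont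
    (B := fun _ => M) (B' := fun _ => 0) ((Finset.sup'_le_iff hne _).2 fun j hj => h0 j (hmem.1 hj))
    continuousOn_const (fun _ _ => hasDerivWithinAt_const _ _ _)
    (fun s hs r hr => (eventually_slope_sup'_lt hne hr
      (fun j hj => (hu s hs.1 j (hmem.1 hj)).mono (Ici_subset_Ici.2 hs.1))
      (fun j hj hj' => hu' s hs.1 j (hmem.1 hj) fun k hk =>
        hj' ▸ Finset.le_sup' (u s) (hmem.2 hk))).frequently) ⟨ht, le_rfl⟩
  exact (Finset.le_sup' (u t) (hmem.2 hi)).trans hF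

end MaximumPrinciple

namespace IsLTRO

variable {X : Type*} [Fintype X] {Q : (X → ℝ) → (X → ℝ)}

lemma map_zero (hQ : IsLTRO Q) : Q 0 = 0 := hQ.1 0

lemma map_add_const (hQ : IsLTRO Q) (f : X → ℝ) (c : ℝ) : Q (f + fun _ => c) = Q f := by
  refine le_antisymm ?_ (by simpa [hQ.1 c] using hQ.2.1 f fun _ => c)
  have h := hQ.2.1 (f + fun _ => c) fun _ => -c
  rwa [hQ.1, add_zero, add_assoc, show ((fun _ => c) + fun _ => -c : X → ℝ) = 0 by
    ext; simp, add_zero] at h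

lemma map_smul_add_const (hQ : IsLTRO Q) {l : ℝ} (hl : 0 ≤ l) (f : X → ℝ) (c : ℝ) :
    Q (l • f + fun _ => c) = l • Q f := by
  rw [hQ.map_add_const, hQ.2.2.1 l hl]

lemma sum_le_map_sum (hQ : IsLTRO Q) {ι : Type*} (s : Finset ι) (g : ι → X → ℝ) :
    ∑ i ∈ s, Q (g i) ≤ Q (∑ i ∈ s, g i) := by
  have := Finset.le_sum_of_subadditive (fun f => -Q f) (by simp [hQ.map_zero])
    (fun f g => by rw [← neg_add]; exact neg_le_neg (hQ.2.1 f g)) s g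
  simpa [Finset.sum_neg_distrib] using this

lemma sum_smul_le_map (hQ : IsLTRO Q) {h : X → ℝ} (hh : 0 ≤ h) (k : X → X → ℝ) :
    ∑ y, h y • Q (k y) ≤ Q (∑ y, h y • k y) := by
  simpa only [hQ.2.2.1 _ (hh _)] using hQ.sum_le_map_sum Finset.univ fun y => h y • k y

/-- Expand `h = ∑ y, h y • 𝟙_y`: all off-diagonal terms `h y * Q 𝟙_y x` are nonnegative. -/
lemma mul_map_ind_self_le (hQ : IsLTRO Q) {h : X → ℝ} (hh : 0 ≤ h) (x : X) :
    h x * Q (ind {x}) x ≤ Q h x := by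
  classical
  have hsum := hQ.sum_smul_le_map hh (fun y => ind {y}) x
  rw [sum_smul_ind_singleton, Finset.sum_apply,
    ← Finset.add_sum_erase _ _ (Finset.mem_univ x)] at hsum
  have hoff : 0 ≤ ∑ y ∈ Finset.univ.erase x, (h y • Q (ind {y})) x :=
    Finset.sum_nonneg fun y hy => mul_nonneg (hh y) (hQ.2.2.2 x y (Finset.ne_of_mem_erase hy).symm)
  simp only [Pi.smul_apply, smul_eq_mul] at hsum hoff
  linarith

lemma map_nonneg_of_eq_zero (hQ : IsLTRO Q) {h : X → ℝ} (hh : 0 ≤ h) {x : X} (hx : h x = 0) :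
    0 ≤ Q h x := by
  simpa [hx] using hQ.mul_map_ind_self_le hh x

lemma map_le_map_of_le_of_eq (hQ : IsLTRO Q) {g d : X → ℝ} (hgd : g ≤ d) {x : X}
    (hx : g x = d x) : Q g x ≤ Q d x := by
  have hdiff := hQ.map_nonneg_of_eq_zero (sub_nonneg.2 hgd) (show (d - g) x = 0 by simp [hx])
  have hadd := hQ.2.1 g (d - g) x
  rw [add_sub_cancel] at hadd
  simp only [Pi.add_apply] at hadd
  linarith

lemma conjOp_le_conjOp_of_le_of_eq (hQ : IsLTRO Q) {g d : X → ℝ} (hgd : g ≤ d) {x : X}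
    (hx : g x = d x) : conjOp Q g x ≤ conjOp Q d x := by
  simpa [conjOp] using hQ.map_le_map_of_le_of_eq (neg_le_neg hgd) (x := x) (by simp [hx])

lemma conjOp_smul_add_const (hQ : IsLTRO Q) {l : ℝ} (hl : 0 ≤ l) (f : X → ℝ) (c : ℝ) :
    conjOp Q (l • f + fun _ => c) = l • conjOp Q f := by
  have : -(l • f + fun _ => c) = l • -f + fun _ => -c := by ext; simp; ring
  rw [conjOp, this, hQ.map_smul_add_const hl, conjOp, smul_neg]

lemma conjOp_le_sum (hQ : IsLTRO Q) {h : X → ℝ} (hh : 0 ≤ h) (x : X) :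
    conjOp Q h x ≤ ∑ y, h y * conjOp Q (ind {y}) x := by
  have hsum := hQ.sum_smul_le_map hh (fun y => -ind {y}) x
  simp only [smul_neg, Finset.sum_neg_distrib, sum_smul_ind_singleton, Finset.sum_apply,
    Pi.smul_apply, smul_eq_mul] at hsum
  simp only [conjOp, Pi.neg_apply, mul_neg, Finset.sum_neg_distrib]
  linarith

/-- At a maximiser `i` of `u t - v t`, `u t ≤ v t + (u t i - v t i)` with equality at `i`,
so `Q (u t) i ≤ Q (v t) i`. -/
theorem le_of_hasDerivWithinAt (hQ : IsLTRO Q) {u v u' v' : ℝ → X → ℝ}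
    (hu : ∀ t, 0 ≤ t → HasDerivWithinAt u (u' t) (Ici 0) t)
    (hv : ∀ t, 0 ≤ t → HasDerivWithinAt v (v' t) (Ici 0) t)
    (hu' : ∀ t, 0 ≤ t → u' t ≤ Q (u t)) (hv' : ∀ t, 0 ≤ t → Q (v t) ≤ v' t)
    (h0 : u 0 ≤ v 0) {t : ℝ} (ht : 0 ≤ t) : u t ≤ v t := fun x => by
  have key := le_of_deriv_nonpos_at_argmax (S := univ) (u := u - v) (u' := u' - v') (M := 0)
    (fun s hs i _ => hasDerivWithinAt_pi.1 ((hu s hs).sub (hv s hs)) i)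
    (fun s hs i _ hmax => ?_) (fun i _ => sub_nonpos.2 (h0 i)) ht (mem_univ x)
  · simpa using key
  · have hle : u s ≤ v s + fun _ => u s i - v s i := fun j => by
      have := hmax j (mem_univ j)
      simp only [Pi.sub_apply, Pi.add_apply] at this ⊢
      linarith
    have hQle := hQ.map_le_map_of_le_of_eq hle (x := i) (by simp)
    rw [hQ.map_add_const] at hQle
    simp only [Pi.sub_apply]
    linarith [hu' s hs i, hv' s hs i]

end IsLTRO

namespace IsSol

variable {X : Type*} [Fintype X] {Q : (X → ℝ) → (X → ℝ)} {T : ℝ → (X → ℝ) → (X → ℝ)}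

lemma eq_of_hasDerivWithinAt (hT : IsSol Q T) (hQ : IsLTRO Q) {u : ℝ → X → ℝ}
    (hu : ∀ t, 0 ≤ t → HasDerivWithinAt u (Q (u t)) (Ici 0) t) {f : X → ℝ} (h0 : u 0 = f)
    {t : ℝ} (ht : 0 ≤ t) : u t = T t f :=
  le_antisymm
    (hQ.le_of_hasDerivWithinAt hu (fun s hs => hT.2 f s hs) (fun _ _ => le_rfl)
      (fun _ _ => le_rfl) (by rw [h0, hT.1]) ht)
    (hQ.le_of_hasDerivWithinAt (fun s hs => hT.2 f s hs) hu (fun _ _ => le_rfl)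
      (fun _ _ => le_rfl) (by rw [h0, hT.1]) ht)

lemma monotone (hT : IsSol Q T) (hQ : IsLTRO Q) {t : ℝ} (ht : 0 ≤ t) : Monotone (T t) :=
  fun f g hfg => hQ.le_of_hasDerivWithinAt (fun s hs => hT.2 f s hs) (fun s hs => hT.2 g s hs)
    (fun _ _ => le_rfl) (fun _ _ => le_rfl) (by rwa [hT.1, hT.1]) ht

lemma map_const (hT : IsSol Q T) (hQ : IsLTRO Q) (c : ℝ) {t : ℝ} (ht : 0 ≤ t) :
    T t (fun _ => c) = fun _ => c :=
  (hT.eq_of_hasDerivWithinAt hQ (u := fun _ _ => c)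
    (fun _ _ => by rw [hQ.1]; exact hasDerivWithinAt_const _ _ _) rfl ht).symm

lemma map_smul (hT : IsSol Q T) (hQ : IsLTRO Q) {l : ℝ} (hl : 0 ≤ l) (f : X → ℝ) {t : ℝ}
    (ht : 0 ≤ t) : T t (l • f) = l • T t f :=
  (hT.eq_of_hasDerivWithinAt hQ (u := fun s => l • T s f)
    (fun s hs => by rw [hQ.2.2.1 l hl]; exact (hT.2 f s hs).const_smul l)
    (by rw [hT.1]) ht).symm

lemma map_add_const (hT : IsSol Q T) (hQ : IsLTRO Q) (f : X → ℝ) (c : ℝ) {t : ℝ}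
    (ht : 0 ≤ t) : T t (f + fun _ => c) = T t f + fun _ => c :=
  (hT.eq_of_hasDerivWithinAt hQ (u := fun s => T s f + fun _ => c)
    (fun s hs => by rw [hQ.map_add_const]; exact (hT.2 f s hs).add_const _)
    (by rw [hT.1]) ht).symm

lemma add_le_map_add (hT : IsSol Q T) (hQ : IsLTRO Q) (f g : X → ℝ) {t : ℝ} (ht : 0 ≤ t) :
    T t f + T t g ≤ T t (f + g) :=
  hQ.le_of_hasDerivWithinAt (u := fun s => T s f + T s g)
    (fun s hs => (hT.2 f s hs).add (hT.2 g s hs)) (fun s hs => hT.2 (f + g) s hs)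
    (fun _ _ => hQ.2.1 _ _) (fun _ _ => le_rfl) (by rw [hT.1, hT.1, hT.1]) ht

lemma add_time (hT : IsSol Q T) (hQ : IsLTRO Q) (f : X → ℝ) {t s : ℝ} (ht : 0 ≤ t)
    (hs : 0 ≤ s) : T (t + s) f = T t (T s f) :=
  hT.eq_of_hasDerivWithinAt hQ (u := fun r => T (r + s) f)
    (fun r hr => by
      have h := (hT.2 f (r + s) (by positivity)).scomp r
        ((hasDerivWithinAt_id r (Ici 0)).add_const s) fun q (hq : 0 ≤ q) => by
          simp only [mem_Ici]; positivity
      rwa [one_smul] at h)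
    (by rw [zero_add]) ht

lemma nonneg (hT : IsSol Q T) (hQ : IsLTRO Q) {f : X → ℝ} (hf : 0 ≤ f) {t : ℝ} (ht : 0 ≤ t) :
    0 ≤ T t f :=
  (hT.map_const hQ 0 ht).symm.le.trans (hT.monotone hQ ht hf)

lemma le_one (hT : IsSol Q T) (hQ : IsLTRO Q) {f : X → ℝ} (hf : f ≤ 1) {t : ℝ} (ht : 0 ≤ t) :
    T t f ≤ 1 :=
  (hT.monotone hQ ht hf).trans_eq (hT.map_const hQ 1 ht)

lemma le_conjOp (hT : IsSol Q T) (hQ : IsLTRO Q) (f : X → ℝ) {t : ℝ} (ht : 0 ≤ t) :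
    T t f ≤ conjOp (T t) f := by
  have h := hT.add_le_map_add hQ f (-f) ht
  rw [add_neg_cancel, show T t 0 = 0 from hT.map_const hQ 0 ht] at h
  intro x
  have hx := h x
  simp only [Pi.add_apply, Pi.zero_apply] at hx
  simp only [conjOp, Pi.neg_apply]
  linarith

lemma conjOp_eq_one_sub (hT : IsSol Q T) (hQ : IsLTRO Q) (f : X → ℝ) {t : ℝ} (ht : 0 ≤ t) :
    conjOp (T t) f = 1 - T t (1 - f) := by
  have h := hT.map_add_const hQ (1 - f) (-1) ht
  rw [show (1 - f) + (fun _ => (-1 : ℝ)) = -f by ext; simp; ring] at h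
  simp only [conjOp, h]
  ext; simp; ring

lemma conjOp_zero (hT : IsSol Q T) (f : X → ℝ) : conjOp (T 0) f = f := by
  simp [conjOp, hT.1]

lemma hasDerivWithinAt_conjOp (hT : IsSol Q T) (f : X → ℝ) {t : ℝ} (ht : 0 ≤ t) :
    HasDerivWithinAt (fun s => conjOp (T s) f) (conjOp Q (conjOp (T t) f)) (Ici 0) t := by
  have h := (hT.2 (-f) t ht).neg
  simp only [conjOp, neg_neg]
  exact h

lemma exp_mul_le (hT : IsSol Q T) (hQ : IsLTRO Q) {f : X → ℝ} (hf : 0 ≤ f) {t : ℝ}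
    (ht : 0 ≤ t) (x : X) : Real.exp (Q (ind {x}) x * t) * f x ≤ T t f x := by
  have hder : ∀ s ∈ Ico 0 t, HasDerivWithinAt (fun r => -T r f x) (-Q (T s f) x) (Ici s) s :=
    fun s hs => (hasDerivWithinAt_pi.1 (hT.2 f s hs.1) x).neg.mono (Ici_subset_Ici.2 hs.1)
  have hcont : ContinuousOn (fun r => -T r f x) (Icc 0 t) := fun s hs =>
    ((hasDerivWithinAt_pi.1 (hT.2 f s hs.1) x).neg.continuousWithinAt).mono Icc_subset_Ici_self
  have h := le_gronwallBound_of_liminf_deriv_right_le hcont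
    (fun s hs r hr => (hder s hs).liminf_right_slope_le hr) (δ := -f x)
    (by rw [hT.1]) (K := Q (ind {x}) x) (ε := 0)
    (fun s hs => by
      have := hQ.mul_map_ind_self_le (hT.nonneg hQ hf hs.1) x
      linarith) t ⟨ht, le_rfl⟩
  rw [gronwallBound_ε0, sub_zero] at h
  linarith

lemma apply_pos (hT : IsSol Q T) (hQ : IsLTRO Q) {f : X → ℝ} (hf : 0 ≤ f) {x : X}
    (hx : 0 < f x) {t : ℝ} (ht : 0 ≤ t) : 0 < T t f x :=
  (mul_pos (Real.exp_pos _) hx).trans_le (hT.exp_mul_le hQ hf ht x)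

variable [Nonempty X]

lemma minf_le_apply (hT : IsSol Q T) (hQ : IsLTRO Q) (f : X → ℝ) {t : ℝ} (ht : 0 ≤ t)
    (x : X) : minf f ≤ T t f x := by
  simpa [hT.map_const hQ _ ht] using hT.monotone hQ ht (fun y => minf_le f y) x

lemma apply_le_maxf (hT : IsSol Q T) (hQ : IsLTRO Q) (f : X → ℝ) {t : ℝ} (ht : 0 ≤ t)
    (x : X) : T t f x ≤ maxf f := by
  simpa [hT.map_const hQ _ ht] using hT.monotone hQ ht (fun y => le_maxf f y) x

end IsSol

structure IsMonotoneSemigroup {X : Type*} (P : ℝ → (X → ℝ) → (X → ℝ)) : Prop where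
  add_time : ∀ ⦃t s : ℝ⦄, 0 ≤ t → 0 ≤ s → ∀ f, P (t + s) f = P t (P s f)
  monotone : ∀ ⦃t : ℝ⦄, 0 ≤ t → Monotone (P t)
  map_smul : ∀ ⦃t : ℝ⦄, 0 ≤ t → ∀ ⦃l : ℝ⦄, 0 ≤ l → ∀ f, P t (l • f) = l • P t f

namespace IsMonotoneSemigroup

variable {X : Type*} {P : ℝ → (X → ℝ) → (X → ℝ)}

lemma conjOp (hP : IsMonotoneSemigroup P) : IsMonotoneSemigroup fun t => conjOp (P t) where
  add_time t s ht hs f := by simp [_root_.conjOp, hP.add_time ht hs]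
  monotone t ht f g hfg := neg_le_neg (hP.monotone ht (neg_le_neg hfg))
  map_smul t ht l hl f := by simp [_root_.conjOp, ← smul_neg, hP.map_smul ht hl]

lemma nonneg (hP : IsMonotoneSemigroup P) {t : ℝ} (ht : 0 ≤ t) {f : X → ℝ} (hf : 0 ≤ f) :
    0 ≤ P t f := by
  have h0 : P t 0 = 0 := by simpa using hP.map_smul ht le_rfl (0 : X → ℝ)
  simpa [h0] using hP.monotone ht hf

/-- `P t f x = P s (P (t - s) f) x ≥ ε * P s 𝟙_B x > 0` for small `s > 0`, where
`ε = min_B P (t - s) f`. -/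
lemma apply_pos_of_hasDerivWithinAt [Finite X] (hP : IsMonotoneSemigroup P) {f : X → ℝ}
    (hf : 0 ≤ f) {B : Set X} (hB : ∀ z ∈ B, ∀ t > 0, 0 < P t f z) {x : X} {D : ℝ}
    (hder : HasDerivWithinAt (fun s => P s (ind B) x) D (Ici 0) 0) (hD : 0 < D)
    (h0 : P 0 (ind B) x = 0) {t : ℝ} (ht : 0 < t) : 0 < P t f x := by
  have hslope := ((hasDerivWithinAt_iff_tendsto_slope' (s := Ioi 0) (lt_irrefl (0 : ℝ))).1
    hder.Ioi_of_Ici).eventually (lt_mem_nhds hD)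
  obtain ⟨s, hs, hst⟩ := (hslope.and (Ioo_mem_nhdsGT ht)).exists
  rw [slope_def_field, h0, sub_zero, sub_zero] at hs
  have hpos : 0 < P s (ind B) x := (div_pos_iff_of_pos_right hst.1).1 hs
  obtain ⟨ε, hε, hεle⟩ := exists_pos_forall_le (f := fun z : B => P (t - s) f z)
    fun z => hB z z.2 _ (sub_pos.2 hst.2)
  have hlow : ε • ind B ≤ P (t - s) f := fun z => by
    by_cases hz : z ∈ B
    · simpa [hz] using hεle ⟨z, hz⟩
    · simpa [hz] using hP.nonneg (sub_pos.2 hst.2).le hf z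
  calc 0 < ε * P s (ind B) x := mul_pos hε hpos
    _ = P s (ε • ind B) x := by rw [hP.map_smul hst.1.le hε.le]; rfl
    _ ≤ P s (P (t - s) f) x := hP.monotone hst.1.le hlow x
    _ = P t f x := by rw [← hP.add_time hst.1.le (sub_pos.2 hst.2).le, add_sub_cancel]

end IsMonotoneSemigroup

lemma IsSol.isMonotoneSemigroup {X : Type*} [Fintype X] {Q : (X → ℝ) → (X → ℝ)}
    {T : ℝ → (X → ℝ) → (X → ℝ)} (hT : IsSol Q T) (hQ : IsLTRO Q) : IsMonotoneSemigroup T where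
  add_time _ _ ht hs f := hT.add_time hQ f ht hs
  monotone _ ht := hT.monotone hQ ht
  map_smul _ ht _ hl f := hT.map_smul hQ hl f ht

section Invariance

variable {X : Type*} [Fintype X]

/-- At a maximiser `i ∈ B` of `u t`, `u t ≤ (1 - u t i) • 𝟙_{Bᶜ} + u t i` with equality at `i`. -/
theorem nonpos_of_map_ind_compl_nonpos {P : (X → ℝ) → (X → ℝ)}
    (hP_le : ∀ {g d : X → ℝ}, g ≤ d → ∀ {x : X}, g x = d x → P g x ≤ P d x)
    (hP_affine : ∀ {l : ℝ}, 0 ≤ l → ∀ (f : X → ℝ) (c : ℝ), P (l • f + fun _ => c) = l • P f)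
    {B : Set X} (hB : ∀ x ∈ B, P (ind Bᶜ) x ≤ 0) {u : ℝ → X → ℝ}
    (hu : ∀ t, 0 ≤ t → HasDerivWithinAt u (P (u t)) (Ici 0) t) (hu1 : ∀ t, 0 ≤ t → u t ≤ 1)
    (hu0 : ∀ x ∈ B, u 0 x ≤ 0) {t : ℝ} (ht : 0 ≤ t) {x : X} (hx : x ∈ B) : u t x ≤ 0 := by
  refine le_of_deriv_nonpos_at_argmax (S := B) (u' := fun s => P (u s))
    (fun s hs i _ => hasDerivWithinAt_pi.1 (hu s hs) i) (fun s hs i hi hmax => ?_) hu0 ht hx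
  have hφ : 0 ≤ 1 - u s i := sub_nonneg.2 (hu1 s hs i)
  have hle : u s ≤ (1 - u s i) • ind Bᶜ + fun _ => u s i := fun z => by
    by_cases hz : z ∈ B
    · simpa [hz] using hmax z hz
    · simpa [hz] using hu1 s hs z
  calc P (u s) i ≤ P ((1 - u s i) • ind Bᶜ + fun _ => u s i) i := hP_le hle (by simp [hi])
    _ = (1 - u s i) * P (ind Bᶜ) i := by rw [hP_affine hφ]; rfl
    _ ≤ 0 := mul_nonpos_of_nonneg_of_nonpos hφ (hB i hi)

end Invariance

section LowerReachability

variable {X : Type*} [Fintype X] {Q : (X → ℝ) → (X → ℝ)} {T : ℝ → (X → ℝ) → (X → ℝ)}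

lemma exists_iterate_lowerStep_eq (Q : (X → ℝ) → (X → ℝ)) (A : Set X) :
    ∃ n, (lowerStep Q)^[n] A = (lowerStep Q)^[n + 1] A := by
  have hmono : Monotone fun n => (lowerStep Q)^[n] A := fun m n hmn =>
    Function.monotone_iterate_of_id_le (fun _ => subset_union_left) hmn A
  obtain ⟨n, hn⟩ := WellFoundedGT.monotone_chain_condition ⟨_, hmono⟩
  exact ⟨n, hn (n + 1) n.le_succ⟩

lemma IsSol.apply_ind_pos_of_lowerReach (hT : IsSol Q T) (hQ : IsLTRO Q) {A : Set X} {x : X}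
    (h : lowerReach Q x A) {t : ℝ} (ht : 0 < t) : 0 < T t (ind A) x := by
  obtain ⟨m, -, hm⟩ := h
  induction m generalizing x t with
  | zero => exact hT.apply_pos hQ (ind_nonneg A) (by simp [show x ∈ A from hm]) ht.le
  | succ m ih =>
    rw [Function.iterate_succ_apply'] at hm
    rcases hm with hm | ⟨hx, hpos⟩
    · exact ih ht hm
    · have hder := hasDerivWithinAt_pi.1 (hT.2 (ind ((lowerStep Q)^[m] A)) 0 le_rfl) x
      rw [hT.1] at hder
      exact (hT.isMonotoneSemigroup hQ).apply_pos_of_hasDerivWithinAt (ind_nonneg A)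
        (fun z hz s hs => ih hs hz) hder hpos (by rw [hT.1]; exact ind_of_notMem hx) ht

lemma IsSol.apply_ind_eq_zero_of_not_lowerReach (hT : IsSol Q T) (hQ : IsLTRO Q) {A : Set X}
    {x : X} (h : ¬ lowerReach Q x A) {t : ℝ} (ht : 0 ≤ t) : T t (ind A) x = 0 := by
  obtain ⟨n, hn⟩ := exists_iterate_lowerStep_eq Q A
  set F := (lowerStep Q)^[n] A
  have hAF : A ⊆ F := Function.id_le_iterate_of_id_le (fun _ => subset_union_left) n A
  have hF : ∀ y ∈ Fᶜ, Q (ind Fᶜᶜ) y ≤ 0 := fun y hy => by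
    rw [compl_compl]
    by_contra hpos
    have hstep : y ∈ lowerStep Q F := Or.inr ⟨hy, not_le.1 hpos⟩
    rw [← Function.iterate_succ_apply' (lowerStep Q), ← hn] at hstep
    exact hy hstep
  have hle := nonpos_of_map_ind_compl_nonpos hQ.map_le_map_of_le_of_eq hQ.map_smul_add_const hF
    (u := fun s => T s (ind F)) (fun s hs => hT.2 _ s hs)
    (fun s hs => hT.le_one hQ (ind_le_one F) hs) (fun y hy => by simp [hT.1, ind_of_notMem hy])
    ht (fun hx => h ⟨n, hn, hx⟩)
  exact le_antisymm ((hT.monotone hQ ht (ind_mono hAF) x).trans hle)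
    (hT.nonneg hQ (ind_nonneg A) ht x)

end LowerReachability

section UpperReachability

variable {X : Type*} [Fintype X] {Q : (X → ℝ) → (X → ℝ)} {T : ℝ → (X → ℝ) → (X → ℝ)}

def upperEdge (Q : (X → ℝ) → (X → ℝ)) (a b : X) : Prop :=
  b ≠ a ∧ 0 < conjOp Q (ind {b}) a

lemma upperReach_iff_reflTransGen {y x : X} :
    upperReach Q y x ↔ Relation.ReflTransGen (upperEdge Q) y x := by
  constructor
  · rintro ⟨n, p, rfl, rfl, hp⟩
    induction n generalizing p with
    | zero => exact .refl
    | succ n ih =>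
      exact .head (hp 0 n.succ_pos) (ih (fun k => p (k + 1)) fun k hk => hp (k + 1) (by omega))
  · intro h
    induction h using Relation.ReflTransGen.head_induction_on with
    | refl => exact ⟨0, fun _ => x, rfl, rfl, by simp⟩
    | @head a b hab _ ih =>
      obtain ⟨n, p, hp0, hpn, hp⟩ := ih
      refine ⟨n + 1, fun k => if k = 0 then a else p (k - 1), by simp, by simpa using hpn,
        fun k hk => ?_⟩
      rcases k with _ | k
      · simpa [hp0, upperEdge] using hab
      · simpa using hp k (by omega)

lemma upperReach_refl (x : X) : upperReach Q x x :=
  upperReach_iff_reflTransGen.2 .refl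

lemma upperReach_trans {x y z : X} (hxy : upperReach Q x y) (hyz : upperReach Q y z) :
    upperReach Q x z :=
  upperReach_iff_reflTransGen.2
    ((upperReach_iff_reflTransGen.1 hxy).trans (upperReach_iff_reflTransGen.1 hyz))

lemma IsSol.conjOp_ind_pos_of_upperReach (hT : IsSol Q T) (hQ : IsLTRO Q) {y x : X}
    (h : upperReach Q y x) {t : ℝ} (ht : 0 < t) : 0 < conjOp (T t) (ind {x}) y := by
  have h' := upperReach_iff_reflTransGen.1 h
  clear h
  induction h' using Relation.ReflTransGen.head_induction_on generalizing t with
  | refl =>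
    exact (hT.apply_pos hQ (ind_nonneg _) (by simp) ht.le).trans_le (hT.le_conjOp hQ _ ht.le x)
  | @head a b hab _ ih =>
    have hder := hasDerivWithinAt_pi.1 (hT.hasDerivWithinAt_conjOp (ind {b}) le_rfl) a
    rw [hT.conjOp_zero] at hder
    exact (hT.isMonotoneSemigroup hQ).conjOp.apply_pos_of_hasDerivWithinAt (B := {b})
      (ind_nonneg _) (fun z hz s hs => (mem_singleton_iff.1 hz) ▸ ih hs) hder hab.2
      (by rw [hT.conjOp_zero]; exact ind_of_notMem hab.1.symm) ht

def UpperClosed (Q : (X → ℝ) → (X → ℝ)) (S : Set X) : Prop :=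
  ∀ z ∈ S, ∀ z', upperEdge Q z z' → z' ∈ S

lemma upperClosed_setOf_upperReach (x : X) : UpperClosed Q {z | upperReach Q x z} :=
  fun _ hz _ hzz' => upperReach_trans hz (upperReach_iff_reflTransGen.2 (.single hzz'))

lemma upperClosed_setOf_forall_upperReach : UpperClosed Q {x | ∀ y, upperReach Q y x} :=
  fun _ hz _ hzz' y => upperReach_trans (hz y) (upperReach_iff_reflTransGen.2 (.single hzz'))

lemma UpperClosed.conjOp_ind_compl_nonpos {S : Set X} (hS : UpperClosed Q S) (hQ : IsLTRO Q)
    {z : X} (hz : z ∈ S) : conjOp Q (ind Sᶜ) z ≤ 0 :=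
  (hQ.conjOp_le_sum (ind_nonneg _) z).trans <| Finset.sum_nonpos fun y _ => by
    by_cases hy : y ∈ S
    · simp [hy]
    · rw [ind_of_mem (show y ∈ Sᶜ from hy), one_mul]
      by_contra hpos
      exact hy (hS z hz y ⟨fun h => hy (h ▸ hz), not_le.1 hpos⟩)

lemma IsSol.conjOp_ind_compl_eq_zero (hT : IsSol Q T) (hQ : IsLTRO Q) {S : Set X}
    (hS : UpperClosed Q S) {z : X} (hz : z ∈ S) {t : ℝ} (ht : 0 ≤ t) :
    conjOp (T t) (ind Sᶜ) z = 0 := by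
  refine le_antisymm ?_ ((hT.nonneg hQ (ind_nonneg _) ht z).trans (hT.le_conjOp hQ _ ht z))
  refine nonpos_of_map_ind_compl_nonpos hQ.conjOp_le_conjOp_of_le_of_eq hQ.conjOp_smul_add_const
    (fun x hx => hS.conjOp_ind_compl_nonpos hQ hx) (u := fun s => conjOp (T s) (ind Sᶜ))
    (fun s hs => hT.hasDerivWithinAt_conjOp _ hs) (fun s hs => ?_)
    (fun x hx => by simp [hT.conjOp_zero, hx]) ht hz
  rw [hT.conjOp_eq_one_sub hQ _ hs]
  exact sub_le_self _ (hT.nonneg hQ (sub_nonneg.2 (ind_le_one _)) hs)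

lemma IsSol.apply_ind_eq_one_of_upperClosed (hT : IsSol Q T) (hQ : IsLTRO Q) {S : Set X}
    (hS : UpperClosed Q S) {z : X} (hz : z ∈ S) {t : ℝ} (ht : 0 ≤ t) : T t (ind S) z = 1 := by
  have h := hT.conjOp_ind_compl_eq_zero hQ hS hz ht
  rw [hT.conjOp_eq_one_sub hQ _ ht, ind_compl, sub_sub_cancel] at h
  simp only [Pi.sub_apply, Pi.one_apply] at h
  linarith

lemma IsSol.apply_ind_eq_zero_of_upperClosed (hT : IsSol Q T) (hQ : IsLTRO Q) {S C : Set X}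
    (hS : UpperClosed Q S) {z : X} (hz : z ∈ S) (hCS : Disjoint C S) {t : ℝ} (ht : 0 ≤ t) :
    T t (ind C) z = 0 := by
  refine le_antisymm ?_ (hT.nonneg hQ (ind_nonneg C) ht z)
  calc T t (ind C) z ≤ conjOp (T t) (ind C) z := hT.le_conjOp hQ _ ht z
    _ ≤ conjOp (T t) (ind Sᶜ) z :=
      (hT.isMonotoneSemigroup hQ).conjOp.monotone ht (ind_mono hCS.subset_compl_right) z
    _ = 0 := hT.conjOp_ind_compl_eq_zero hQ hS hz ht

/-- A state `x` whose reachable set is smallest is reached back from all the states it reaches;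
a state `y` that does not reach `x` therefore reaches none of them. -/
lemma exists_disjoint_setOf_upperReach [Nonempty X]
    (hE : ¬ {x : X | ∀ y, upperReach Q y x}.Nonempty) :
    ∃ x y : X, Disjoint {z | upperReach Q x z} {z | upperReach Q y z} := by
  obtain ⟨x, hx⟩ := Finite.exists_min fun x : X => {z | upperReach Q x z}.ncard
  have hback : ∀ z, upperReach Q x z → upperReach Q z x := fun z hxz => by
    have heq : {w | upperReach Q z w} = {w | upperReach Q x w} :=
      Set.eq_of_subset_of_ncard_le (fun w hzw => upperReach_trans hxz hzw) (hx z)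
    exact (heq ▸ upperReach_refl x : x ∈ {w | upperReach Q z w})
  obtain ⟨y, hy⟩ : ∃ y, ¬ upperReach Q y x := by
    by_contra! h
    exact hE ⟨x, h⟩
  exact ⟨x, y, Set.disjoint_left.2 fun z hxz hyz => hy (upperReach_trans hyz (hback z hxz))⟩

end UpperReachability

section Necessity

variable {X : Type*} [Fintype X] {Q : (X → ℝ) → (X → ℝ)} {T : ℝ → (X → ℝ) → (X → ℝ)}

lemma not_ergodicQ_of_eq_zero_of_eq_one {f : X → ℝ} {x y : X}
    (hx : ∀ t, 0 ≤ t → T t f x = 0) (hy : ∀ t, 0 ≤ t → T t f y = 1) : ¬ ErgodicQ T := by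
  intro herg
  obtain ⟨c, hc⟩ := herg f
  have hlim : ∀ z a, (∀ t, 0 ≤ t → T t f z = a) → a = c := fun z a hz =>
    tendsto_nhds_unique tendsto_const_nhds
      ((tendsto_pi_nhds.1 hc z).congr' (eventually_atTop.2 ⟨0, hz⟩))
  exact zero_ne_one ((hlim x 0 hx).trans (hlim y 1 hy).symm)

variable [Nonempty X]

theorem IsSol.reach_of_ergodicQ (hT : IsSol Q T) (hQ : IsLTRO Q) (herg : ErgodicQ T) :
    {x : X | ∀ y, upperReach Q y x}.Nonempty ∧
      ∀ x, lowerReach Q x {x : X | ∀ y, upperReach Q y x} := by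
  have hne : {x : X | ∀ y, upperReach Q y x}.Nonempty := by
    by_contra hE
    obtain ⟨x, y, hxy⟩ := exists_disjoint_setOf_upperReach hE
    exact not_ergodicQ_of_eq_zero_of_eq_one
      (fun t ht => hT.apply_ind_eq_zero_of_upperClosed hQ (upperClosed_setOf_upperReach y)
        (upperReach_refl y) hxy ht)
      (fun t ht => hT.apply_ind_eq_one_of_upperClosed hQ (upperClosed_setOf_upperReach x)
        (upperReach_refl x) ht) herg
  refine ⟨hne, fun x => ?_⟩
  by_contra hlow
  obtain ⟨e, he⟩ := hne
  exact not_ergodicQ_of_eq_zero_of_eq_one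
    (fun t ht => hT.apply_ind_eq_zero_of_not_lowerReach hQ hlow ht)
    (fun t ht => hT.apply_ind_eq_one_of_upperClosed hQ upperClosed_setOf_forall_upperReach he ht)
    herg

end Necessity

section Sufficiency

variable {X : Type*} [Fintype X] {Q : (X → ℝ) → (X → ℝ)} {T : ℝ → (X → ℝ) → (X → ℝ)}

/-- With `e` minimising `g` on `E`: `T_t g ≥ T_t (g e • 𝟙_E) ≥ g e * δ` and
`1 - T_t g = T̄_t (1 - g) ≥ T̄_t ((1 - g e) • 𝟙_e) ≥ (1 - g e) * γ`. -/
lemma IsSol.sub_le_one_sub_min (hT : IsSol Q T) (hQ : IsLTRO Q) {E : Set X} (hE : E.Nonempty)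
    {t δ γ : ℝ} (ht : 0 ≤ t) (hδ : ∀ x, δ ≤ T t (ind E) x)
    (hγ : ∀ e ∈ E, ∀ x, γ ≤ conjOp (T t) (ind {e}) x) {g : X → ℝ} (hg0 : 0 ≤ g) (hg1 : g ≤ 1)
    (x y : X) : T t g x - T t g y ≤ 1 - min δ γ := by
  obtain ⟨e, he, hmin⟩ := E.exists_min_image g (toFinite E) hE
  have hT' := (hT.isMonotoneSemigroup hQ).conjOp
  have hm1 : 0 ≤ 1 - g e := sub_nonneg.2 (hg1 e)
  have hlow : g e * δ ≤ T t g y := calc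
    g e * δ ≤ g e * T t (ind E) y := mul_le_mul_of_nonneg_left (hδ y) (hg0 e)
    _ = T t (g e • ind E) y := by rw [hT.map_smul hQ (hg0 e) _ ht]; rfl
    _ ≤ T t g y := hT.monotone hQ ht (fun z => by
        by_cases hz : z ∈ E
        · simpa [hz] using hmin z hz
        · simpa [hz] using hg0 z) y
  have hup : (1 - g e) * γ ≤ 1 - T t g x := calc
    (1 - g e) * γ ≤ (1 - g e) * conjOp (T t) (ind {e}) x :=
      mul_le_mul_of_nonneg_left (hγ e he x) hm1
    _ = conjOp (T t) ((1 - g e) • ind {e}) x := by rw [hT'.map_smul ht hm1]; rfl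
    _ ≤ conjOp (T t) (1 - g) x := hT'.monotone ht (fun z => by
        by_cases hz : z = e
        · simp [hz]
        · simpa [hz] using hg1 z) x
    _ = 1 - T t g x := by rw [hT.conjOp_eq_one_sub hQ _ ht, sub_sub_cancel]; rfl
  nlinarith [mul_le_mul_of_nonneg_left (min_le_left δ γ) (hg0 e),
    mul_le_mul_of_nonneg_left (min_le_right δ γ) hm1]

variable [Nonempty X]

/-- Write `h = osc h • g + min h` with `0 ≤ g ≤ 1`. -/
lemma osc_le_mul_osc {R : (X → ℝ) → (X → ℝ)}
    (hR : ∀ {l : ℝ}, 0 ≤ l → ∀ (f : X → ℝ) (c : ℝ),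
      R (l • f + fun _ => c) = l • R f + fun _ => c)
    {κ : ℝ} (hκ : ∀ g, 0 ≤ g → g ≤ 1 → ∀ x y, R g x - R g y ≤ κ) (h : X → ℝ) :
    osc (R h) ≤ κ * osc h := by
  have ho := osc_nonneg h
  set g : X → ℝ := fun z => (h z - minf h) / osc h
  have hg0 : 0 ≤ g := fun z => div_nonneg (sub_nonneg.2 (minf_le h z)) ho
  have hg1 : g ≤ 1 := fun z =>
    div_le_one_of_le₀ (by linarith [le_maxf h z, show osc h = maxf h - minf h from rfl]) ho
  have hrep : h = osc h • g + fun _ => minf h := by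
    ext z
    rcases ho.eq_or_lt with ho0 | hopos
    · have : h z = minf h := le_antisymm
        (by linarith [le_maxf h z, show osc h = maxf h - minf h from rfl]) (minf_le h z)
      simp [this, ← ho0]
    · simp only [g, Pi.add_apply, Pi.smul_apply, smul_eq_mul]
      field_simp
      ring
  have hRh : R h = osc h • R g + fun _ => minf h := by
    conv_lhs => rw [hrep]
    exact hR ho g (minf h)
  rw [osc_le_iff]
  intro x y
  rw [hRh]
  have := hκ g hg0 hg1 x y
  simp only [Pi.add_apply, Pi.smul_apply, smul_eq_mul]
  nlinarith

theorem IsSol.ergodicQ_of_osc_le (hT : IsSol Q T) (hQ : IsLTRO Q) {κ : ℝ} (hκ0 : 0 ≤ κ)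
    (hκ1 : κ < 1) (hosc : ∀ h, osc (T 1 h) ≤ κ * osc h) : ErgodicQ T := by
  intro f
  have hosc_n : ∀ n : ℕ, osc (T n f) ≤ κ ^ n * osc f := by
    intro n
    induction n with
    | zero => simp [hT.1]
    | succ n ih =>
      rw [Nat.cast_succ, add_comm, hT.add_time hQ f zero_le_one n.cast_nonneg, pow_succ',
        mul_assoc]
      exact (hosc _).trans (mul_le_mul_of_nonneg_left ih hκ0)
  have hbetween : ∀ (n : ℕ) t, (n : ℝ) ≤ t → ∀ x,
      minf (T n f) ≤ T t f x ∧ T t f x ≤ maxf (T n f) := by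
    intro n t hnt x
    have hnt' := sub_nonneg.2 hnt
    rw [← sub_add_cancel t n, hT.add_time hQ f hnt' n.cast_nonneg]
    exact ⟨hT.minf_le_apply hQ _ hnt' x, hT.apply_le_maxf hQ _ hnt' x⟩
  have hmono : Monotone fun n : ℕ => minf (T n f) := monotone_nat_of_le_succ fun n =>
    le_minf fun x => (hbetween n _ (by push_cast; linarith) x).1
  have hbdd : BddAbove (range fun n : ℕ => minf (T n f)) := ⟨maxf f, by
    rintro _ ⟨n, rfl⟩
    exact (minf_le _ (Classical.arbitrary X)).trans (hT.apply_le_maxf hQ f n.cast_nonneg _)⟩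
  have hlo := tendsto_atTop_ciSup hmono hbdd
  have hosc0 : Tendsto (fun n : ℕ => osc (T n f)) atTop (𝓝 0) :=
    squeeze_zero (fun n => osc_nonneg _) hosc_n
      (by simpa using (tendsto_pow_atTop_nhds_zero_of_lt_one hκ0 hκ1).mul_const (osc f))
  have hhi : Tendsto (fun n : ℕ => maxf (T n f)) atTop (𝓝 (⨆ n : ℕ, minf (T n f))) := by
    simpa [osc] using hlo.add hosc0
  refine ⟨⨆ n : ℕ, minf (T n f), tendsto_pi_nhds.2 fun x =>
    tendsto_of_tendsto_of_tendsto_of_le_of_le' (hlo.comp tendsto_nat_floor_atTop)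
      (hhi.comp tendsto_nat_floor_atTop) ?_ ?_⟩
  · filter_upwards [eventually_ge_atTop 0] with t ht using (hbetween _ t (Nat.floor_le ht) x).1
  · filter_upwards [eventually_ge_atTop 0] with t ht using (hbetween _ t (Nat.floor_le ht) x).2

theorem IsSol.ergodicQ_of_reach (hT : IsSol Q T) (hQ : IsLTRO Q)
    (hne : {x : X | ∀ y, upperReach Q y x}.Nonempty)
    (hlow : ∀ x ∉ {x : X | ∀ y, upperReach Q y x},
      lowerReach Q x {x : X | ∀ y, upperReach Q y x}) :
    ErgodicQ T := by
  set E := {x : X | ∀ y, upperReach Q y x}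
  obtain ⟨δ, hδ, hδle⟩ := exists_pos_forall_le (f := fun x => T 1 (ind E) x) fun x => by
    by_cases hx : x ∈ E
    · exact hT.apply_pos hQ (ind_nonneg E) (by simp [hx]) zero_le_one
    · exact hT.apply_ind_pos_of_lowerReach hQ (hlow x hx) one_pos
  obtain ⟨γ, hγ, hγle⟩ :=
    exists_pos_forall_le (f := fun p : E × X => conjOp (T 1) (ind {p.1.1}) p.2) fun p =>
      hT.conjOp_ind_pos_of_upperReach hQ (p.1.2 p.2) one_pos
  have hδ1 : δ ≤ 1 :=
    (hδle (Classical.arbitrary X)).trans (hT.le_one hQ (ind_le_one E) zero_le_one _)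
  have hcontract : ∀ h, osc (T 1 h) ≤ (1 - min δ γ) * osc h :=
    osc_le_mul_osc
      (fun hl f c => by rw [hT.map_add_const hQ _ _ zero_le_one, hT.map_smul hQ hl _ zero_le_one])
      fun g hg0 hg1 => hT.sub_le_one_sub_min hQ hne zero_le_one hδle
        (fun e he x => hγle (⟨e, he⟩, x)) hg0 hg1
  exact hT.ergodicQ_of_osc_le hQ (by linarith [min_le_left δ γ]) (by linarith [lt_min hδ hγ])
    hcontract

end Sufficiency

/-- Theorem 8 (main theorem): `Q` is ergodic iff the set `𝒳_1A` of states upper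
reachable from every state is nonempty and is lower reachable from every state
outside of it. -/
theorem stmt0 {X : Type*} [Fintype X] [Nonempty X]
    (Q : (X → ℝ) → (X → ℝ)) (hQ : IsLTRO Q)
    (T : ℝ → (X → ℝ) → (X → ℝ)) (hT : IsSol Q T) :
    ErgodicQ T ↔
      ({x : X | ∀ y : X, upperReach Q y x}.Nonempty ∧
        ∀ x : X, x ∉ {x : X | ∀ y : X, upperReach Q y x} →
          lowerReach Q x {x : X | ∀ y : X, upperReach Q y x}) :=
  ⟨fun herg => (hT.reach_of_ergodicQ hQ herg).imp_right fun h x _ => h x,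
    fun ⟨hne, hlow⟩ => hT.ergodicQ_of_reach hQ hne hlow⟩
end

section
/- Let Q be a lower transition rate operator on a finite nonempty set 𝒳, and let (T_t)_{t≥0} be the associated family of operators determined by the differential equation d/dt T_t f = Q(T_t f) with T_0 f = f. Then for any t > 0, Q is ergodic (i.e. for all f ∈ 𝓛(𝒳), lim_{s→∞} T_s f exists and is a constant function) if and only if the single operator T_t is ergodic as a lower transition operator (i.e. for all f ∈ 𝓛(𝒳), lim_{n→∞} (T_t)^n f exists and is a constant function). -/
/-!
Superadditivity and non-negative homogeneity make `Q` Lipschitz on the finite-dimensional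
space `𝓛(𝒳)`. By Gronwall's inequality the solution family is then unique, hence a semigroup
(`T_{u+s} = T_s ∘ T_u`, so `T_{nt} = (T_t)ⁿ`), each `T_s` is `e^{Ks}`-Lipschitz, and constants
are fixed points. Ergodicity of `Q` thus restricts to the times `nt`; conversely, writing
`s = nt + r` with `0 ≤ r < t` gives `‖T_s f - c‖ ≤ e^{Kt} ‖(T_t)ⁿ f - c‖`.
-/

open Filter Topology

open scoped NNReal

section Superadditive

variable {ι Y : Type*} [Fintype Y] {Q : (ι → ℝ) → (Y → ℝ)}

theorem neg_norm_mul_le_apply_smul (hsmul : ∀ l : ℝ, 0 ≤ l → ∀ f, Q (l • f) = l • Q f)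
    {l : ℝ} (hl : 0 ≤ l) (v : ι → ℝ) (y : Y) : -(‖Q v‖ * l) ≤ Q (l • v) y := by
  have hQv : -‖Q v‖ ≤ Q v y := neg_le_of_abs_le (norm_le_pi_norm (Q v) y)
  rw [hsmul l hl, Pi.smul_apply, smul_eq_mul]
  nlinarith

theorem neg_mul_abs_le_apply_single [DecidableEq ι]
    (hsmul : ∀ l : ℝ, 0 ≤ l → ∀ f, Q (l • f) = l • Q f) (i : ι) (a : ℝ) (y : Y) :
    -((‖Q (Pi.single i 1)‖ + ‖Q (-Pi.single i 1)‖) * |a|) ≤ Q (Pi.single i a) y := by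
  have hnorms : 0 ≤ ‖Q (Pi.single i 1)‖ ∧ 0 ≤ ‖Q (-Pi.single i 1)‖ :=
    ⟨norm_nonneg _, norm_nonneg _⟩
  rcases le_or_gt 0 a with ha | ha
  · have h := neg_norm_mul_le_apply_smul hsmul ha (Pi.single i 1) y
    rw [show a • Pi.single i (1 : ℝ) = Pi.single i a by
      funext j; by_cases hj : j = i <;> simp [hj]] at h
    rw [abs_of_nonneg ha]
    nlinarith
  · have h := neg_norm_mul_le_apply_smul hsmul (neg_nonneg.2 ha.le) (-Pi.single i 1) y
    rw [show (-a) • -Pi.single i (1 : ℝ) = Pi.single i a by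
      funext j; by_cases hj : j = i <;> simp [hj]] at h
    rw [abs_of_neg ha]
    nlinarith

variable [Fintype ι]

theorem exists_neg_mul_norm_le_apply (hadd : ∀ f g, Q f + Q g ≤ Q (f + g))
    (hsmul : ∀ l : ℝ, 0 ≤ l → ∀ f, Q (l • f) = l • Q f) :
    ∃ C : ℝ, 0 ≤ C ∧ ∀ h y, -(C * ‖h‖) ≤ Q h y := by
  classical
  set c : ι → ℝ := fun i => ‖Q (Pi.single i 1)‖ + ‖Q (-Pi.single i 1)‖
  have hQ0 : Q 0 = 0 := by simpa using hsmul 0 le_rfl 0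
  refine ⟨∑ i, c i, Finset.sum_nonneg fun i _ => by positivity, fun h y => ?_⟩
  have hsuper : ∑ i, Q (Pi.single i (h i)) ≤ Q h := by
    have := Finset.le_sum_of_subadditive (fun v => -Q v) (by simp [hQ0])
      (fun u v => by simpa [neg_add_rev, add_comm] using hadd u v) Finset.univ
      (fun i => Pi.single i (h i))
    simpa [Finset.univ_sum_single, Finset.sum_neg_distrib] using this
  calc -((∑ i, c i) * ‖h‖) = ∑ i, -(c i * ‖h‖) := by
        rw [Finset.sum_mul, Finset.sum_neg_distrib]
    _ ≤ ∑ i, -(c i * |h i|) := by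
        gcongr with i
        exact norm_le_pi_norm h i
    _ ≤ ∑ i, Q (Pi.single i (h i)) y :=
        Finset.sum_le_sum fun i _ => neg_mul_abs_le_apply_single hsmul i (h i) y
    _ = (∑ i, Q (Pi.single i (h i))) y := (Finset.sum_apply y _ _).symm
    _ ≤ Q h y := hsuper y

theorem exists_lipschitzWith_of_superadditive (hadd : ∀ f g, Q f + Q g ≤ Q (f + g))
    (hsmul : ∀ l : ℝ, 0 ≤ l → ∀ f, Q (l • f) = l • Q f) : ∃ K, LipschitzWith K Q := by
  obtain ⟨C, hC0, hC⟩ := exists_neg_mul_norm_le_apply hadd hsmul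
  -- `Q f - Q g ≥ Q (f - g)` by superadditivity
  have hsub : ∀ f g y, -(C * ‖f - g‖) ≤ Q f y - Q g y := fun f g y => by
    have := hadd (f - g) g y
    simp only [sub_add_cancel, Pi.add_apply] at this
    linarith [hC (f - g) y]
  refine ⟨⟨C, hC0⟩, LipschitzWith.of_dist_le_mul fun f g => ?_⟩
  rw [dist_eq_norm, dist_eq_norm]
  change ‖Q f - Q g‖ ≤ C * ‖f - g‖
  refine (pi_norm_le_iff_of_nonneg (by positivity)).2 fun y => abs_le.2 ⟨?_, ?_⟩
  · exact hsub f g y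
  · have := hsub g f y
    rw [← norm_neg, neg_sub] at this
    simp only [Pi.sub_apply]
    linarith

end Superadditive

section LipschitzODE

variable {E : Type*} [NormedAddCommGroup E] [NormedSpace ℝ E] {Q : E → E} {K : ℝ≥0}
  {g h : ℝ → E}

theorem norm_sub_le_mul_exp_of_lipschitzWith (hQ : LipschitzWith K Q)
    (hg : ∀ s, 0 ≤ s → HasDerivWithinAt g (Q (g s)) (Set.Ici 0) s)
    (hh : ∀ s, 0 ≤ s → HasDerivWithinAt h (Q (h s)) (Set.Ici 0) s) {s : ℝ} (hs : 0 ≤ s) :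
    ‖g s - h s‖ ≤ ‖g 0 - h 0‖ * Real.exp (K * s) := by
  have hcont : ContinuousOn (fun r => g r - h r) (Set.Icc 0 s) := fun r hr =>
    ((hg r hr.1).sub (hh r hr.1)).continuousWithinAt.mono fun _ hz => hz.1
  have hderiv : ∀ r ∈ Set.Ico 0 s,
      HasDerivWithinAt (fun r => g r - h r) (Q (g r) - Q (h r)) (Set.Ici r) r :=
    fun r hr => ((hg r hr.1).sub (hh r hr.1)).mono (Set.Ici_subset_Ici.2 hr.1)
  have hbound : ∀ r ∈ Set.Ico 0 s, ‖Q (g r) - Q (h r)‖ ≤ K * ‖g r - h r‖ + 0 := fun r _ => by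
    simpa [dist_eq_norm] using hQ.dist_le_mul (g r) (h r)
  simpa [gronwallBound_ε0] using norm_le_gronwallBound_of_norm_deriv_right_le hcont hderiv
    le_rfl hbound s (Set.right_mem_Icc.2 hs)

theorem eq_of_lipschitzWith_of_eq_at_zero (hQ : LipschitzWith K Q)
    (hg : ∀ s, 0 ≤ s → HasDerivWithinAt g (Q (g s)) (Set.Ici 0) s)
    (hh : ∀ s, 0 ≤ s → HasDerivWithinAt h (Q (h s)) (Set.Ici 0) s) (h0 : g 0 = h 0)
    {s : ℝ} (hs : 0 ≤ s) : g s = h s := by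
  have := norm_sub_le_mul_exp_of_lipschitzWith hQ hg hh hs
  rw [h0, sub_self, norm_zero, zero_mul] at this
  exact sub_eq_zero.1 (norm_le_zero_iff.1 this)

end LipschitzODE

namespace IsSol

variable {X : Type*} [Fintype X] {Q : (X → ℝ) → (X → ℝ)} {K : ℝ≥0}
  {T : ℝ → (X → ℝ) → (X → ℝ)}

theorem norm_sub_le (hQ : LipschitzWith K Q) (hT : IsSol Q T) (f g : X → ℝ) {s : ℝ}
    (hs : 0 ≤ s) : ‖T s f - T s g‖ ≤ ‖f - g‖ * Real.exp (K * s) := by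
  simpa [hT.1] using norm_sub_le_mul_exp_of_lipschitzWith hQ (hT.2 f) (hT.2 g) hs

theorem add_apply (hQ : LipschitzWith K Q) (hT : IsSol Q T) (f : X → ℝ) {u s : ℝ}
    (hu : 0 ≤ u) (hs : 0 ≤ s) : T (u + s) f = T s (T u f) := by
  have hshift : ∀ r, 0 ≤ r →
      HasDerivWithinAt (fun r => T (u + r) f) (Q (T (u + r) f)) (Set.Ici 0) r := fun r hr =>
    (hT.2 f (u + r) (by positivity)).scomp_of_eq r ((hasDerivWithinAt_id r _).const_add u)
      (fun _ hr' => add_nonneg hu hr') rfl |>.congr_deriv (by simp)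
  exact eq_of_lipschitzWith_of_eq_at_zero hQ hshift (hT.2 (T u f)) (by simp [hT.1]) hs

theorem natCast_mul_apply (hQ : LipschitzWith K Q) (hT : IsSol Q T) {t : ℝ} (ht : 0 ≤ t)
    (n : ℕ) (f : X → ℝ) : T (n * t) f = (T t)^[n] f := by
  induction n generalizing f with
  | zero => simpa using hT.1 f
  | succ n ih =>
    rw [Function.iterate_succ_apply, ← ih, ← hT.add_apply hQ f ht (by positivity)]
    push_cast
    ring_nf

theorem apply_const (hQ : LipschitzWith K Q) (hT : IsSol Q T) {c : ℝ}
    (hc : Q (fun _ => c) = 0) {s : ℝ} (hs : 0 ≤ s) : T s (fun _ => c) = fun _ => c :=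
  eq_of_lipschitzWith_of_eq_at_zero hQ (hT.2 _) (fun r _ => hc ▸ hasDerivWithinAt_const r _ _)
    (hT.1 _) hs

theorem norm_sub_const_le_iterate_floor (hQ : LipschitzWith K Q) (hT : IsSol Q T) {c : ℝ}
    (hc : Q (fun _ => c) = 0) {t : ℝ} (ht : 0 < t) (f : X → ℝ) {s : ℝ} (hs : 0 ≤ s) :
    ‖T s f - fun _ => c‖ ≤ Real.exp (K * t) * ‖(T t)^[⌊s / t⌋₊] f - fun _ => c‖ := by
  set n := ⌊s / t⌋₊
  set r := s - n * t
  have hr0 : 0 ≤ r := by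
    have := (le_div_iff₀ ht).1 (Nat.floor_le (div_nonneg hs ht.le))
    linarith
  have hrt : r ≤ t := by
    have := (div_lt_iff₀ ht).1 (Nat.lt_floor_add_one (s / t))
    linarith
  calc ‖T s f - fun _ => c‖ = ‖T r ((T t)^[n] f) - T r fun _ => c‖ := by
        rw [← hT.natCast_mul_apply hQ ht.le, ← hT.add_apply hQ f (by positivity) hr0,
          hT.apply_const hQ hc hr0, add_sub_cancel]
    _ ≤ ‖(T t)^[n] f - fun _ => c‖ * Real.exp (K * r) := hT.norm_sub_le hQ _ _ hr0
    _ ≤ Real.exp (K * t) * ‖(T t)^[n] f - fun _ => c‖ := by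
        rw [mul_comm]
        gcongr

theorem tendsto_atTop_of_tendsto_iterate (hQ : LipschitzWith K Q) (hT : IsSol Q T) {c : ℝ}
    (hc : Q (fun _ => c) = 0) {t : ℝ} (ht : 0 < t) {f : X → ℝ}
    (h : Tendsto (fun n : ℕ => (T t)^[n] f) atTop (𝓝 fun _ => c)) :
    Tendsto (fun s => T s f) atTop (𝓝 fun _ => c) := by
  have hfloor : Tendsto (fun s => ⌊s / t⌋₊) atTop atTop :=
    tendsto_nat_floor_atTop.comp (tendsto_id.atTop_div_const ht)
  rw [tendsto_iff_norm_sub_tendsto_zero]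
  refine squeeze_zero' (Eventually.of_forall fun s => norm_nonneg _)
    ((eventually_ge_atTop 0).mono fun s => hT.norm_sub_const_le_iterate_floor hQ hc ht f) ?_
  simpa using ((tendsto_iff_norm_sub_tendsto_zero.1 h).comp hfloor).const_mul (Real.exp (K * t))

end IsSol

theorem stmt1_general {X : Type*} [Fintype X]
    (Q : (X → ℝ) → (X → ℝ)) (hQ : IsLTRO Q)
    (T : ℝ → (X → ℝ) → (X → ℝ)) (hT : IsSol Q T)
    (t : ℝ) (ht : 0 < t) :
    ErgodicQ T ↔ ErgodicT (T t) := by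
  obtain ⟨K, hK⟩ := exists_lipschitzWith_of_superadditive hQ.2.1 hQ.2.2.1
  refine ⟨fun hE f => ?_, fun hE f => ?_⟩
  · obtain ⟨c, hc⟩ := hE f
    refine ⟨c, ?_⟩
    simpa only [Function.comp_def, hT.natCast_mul_apply hK ht.le] using
      hc.comp (tendsto_natCast_atTop_atTop.atTop_mul_const ht)
  · obtain ⟨c, hc⟩ := hE f
    exact ⟨c, hT.tendsto_atTop_of_tendsto_iterate hK (hQ.1 c) ht hc⟩

/-- For any `t > 0`, `Q` is ergodic iff the single lower transition operator
`T_t` is ergodic in the discrete-time sense. -/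
theorem stmt1 {X : Type*} [Fintype X] [Nonempty X]
    (Q : (X → ℝ) → (X → ℝ)) (hQ : IsLTRO Q)
    (T : ℝ → (X → ℝ) → (X → ℝ)) (hT : IsSol Q T)
    (t : ℝ) (ht : 0 < t) :
    ErgodicQ T ↔ ErgodicT (T t) :=
  stmt1_general Q hQ T hT t ht
end
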